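/- Let μ ≥ ν > 0 and define the map Ω⁻¹ : ℍ → ℝ × (0,∞) on the open upper half plane by Ω⁻¹(z) = (x(z), y(z)) with x(z) = |z|(μ+ν) + 2√(μν) Re(z) and y(z) = |z|. Then Ω⁻¹ is injective and its image is the set {(x,y) : y > 0, y(√μ - √ν)² < x < y(√μ + √ν)²}. -/

import Mathlib

open Complex Set

/-!
`Ω⁻¹` factors as `z ↦ (Re z, |z|)`, a bijection from `ℍ` onto the cone `{|r| < y}` (the
imaginary part is recovered as `√(|z|² - (Re z)²)`), followed by the shear
`(r, y) ↦ ((μ + ν) y + 2√(μν) r, y)`, which maps that cone onto the stated sector because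
`(√μ ∓ √ν)² = μ + ν ∓ 2√(μν)`.
-/

namespace Complex

theorem injOn_re_norm_upperHalf :
    InjOn (fun z : ℂ => (z.re, ‖z‖)) {z : ℂ | 0 < z.im} := by
  intro z hz w hw h
  obtain ⟨hre, hnorm⟩ := Prod.mk.inj h
  have him_sq : z.im ^ 2 = w.im ^ 2 := by
    rw [← sq_norm_sub_sq_re, ← sq_norm_sub_sq_re, hre, hnorm]
  exact Complex.ext hre ((pow_left_inj₀ hz.le hw.le two_ne_zero).1 him_sq)

theorem image_re_norm_upperHalf :
    (fun z : ℂ => (z.re, ‖z‖)) '' {z : ℂ | 0 < z.im} = {p : ℝ × ℝ | |p.1| < p.2} := by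
  ext ⟨r, y⟩
  simp only [mem_image, mem_ofPred_eq, Prod.mk.injEq]
  constructor
  · rintro ⟨z, hz, rfl, rfl⟩
    exact abs_re_lt_norm.2 hz.ne'
  · intro hry
    have hy : 0 ≤ y := (abs_nonneg r).trans hry.le
    have hpos : 0 < y ^ 2 - r ^ 2 := by
      rw [sub_pos, ← sq_abs r]
      exact pow_lt_pow_left₀ hry (abs_nonneg r) two_ne_zero
    refine ⟨⟨r, √(y ^ 2 - r ^ 2)⟩, Real.sqrt_pos.2 hpos, rfl, ?_⟩
    rw [norm_def, normSq_mk, ← sq, ← sq, Real.sq_sqrt hpos.le, add_sub_cancel,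
      Real.sqrt_sq hy]

end Complex

theorem injective_shear (a : ℝ) {c : ℝ} (hc : c ≠ 0) :
    Function.Injective fun p : ℝ × ℝ => (a * p.2 + c * p.1, p.2) := by
  intro p q h
  obtain ⟨hx, hy⟩ : a * p.2 + c * p.1 = a * q.2 + c * q.1 ∧ p.2 = q.2 := Prod.ext_iff.1 h
  rw [hy, add_right_inj, mul_right_inj' hc] at hx
  exact Prod.ext hx hy

theorem image_abs_lt_shear (a : ℝ) {c : ℝ} (hc : 0 < c) :
    (fun p : ℝ × ℝ => (a * p.2 + c * p.1, p.2)) '' {p : ℝ × ℝ | |p.1| < p.2} =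
      {p : ℝ × ℝ | 0 < p.2 ∧ p.2 * (a - c) < p.1 ∧ p.1 < p.2 * (a + c)} := by
  ext ⟨x, y⟩
  simp only [mem_image, mem_ofPred_eq, Prod.mk.injEq, Prod.exists]
  constructor
  · rintro ⟨r, y, hry, rfl, rfl⟩
    obtain ⟨hl, hr⟩ := abs_lt.1 hry
    refine ⟨(abs_nonneg r).trans_lt hry, ?_, ?_⟩ <;> nlinarith
  · rintro ⟨-, hl, hr⟩
    refine ⟨(x - a * y) / c, y, abs_lt.2 ⟨?_, ?_⟩, by field_simp; ring, rfl⟩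
    · rw [lt_div_iff₀ hc]; linarith
    · rw [div_lt_iff₀ hc]; linarith

theorem Real.sqrt_sub_sqrt_sq {μ : ℝ} (hμ : 0 ≤ μ) {ν : ℝ} (hν : 0 ≤ ν) :
    (√μ - √ν) ^ 2 = μ + ν - 2 * √(μ * ν) := by
  rw [sub_sq, Real.sq_sqrt hμ, Real.sq_sqrt hν, Real.sqrt_mul hμ]
  ring

theorem Real.sqrt_add_sqrt_sq {μ : ℝ} (hμ : 0 ≤ μ) {ν : ℝ} (hν : 0 ≤ ν) :
    (√μ + √ν) ^ 2 = μ + ν + 2 * √(μ * ν) := by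
  rw [add_sq, Real.sq_sqrt hμ, Real.sq_sqrt hν, Real.sqrt_mul hμ]
  ring

/-- For `μ ≥ ν > 0`, the map `Ω⁻¹(z) = (|z|(μ+ν) + 2√(μν) Re z, |z|)` is
injective on the open upper half plane, and its image is
`{(x,y) : y > 0, y(√μ - √ν)² < x < y(√μ + √ν)²}`. -/
theorem stmt10 (μ ν : ℝ) (hν : 0 < ν) (hμν : ν ≤ μ)
    (f : ℂ → ℝ × ℝ)
    (hf : ∀ z : ℂ, f z =
      (‖z‖ * (μ + ν) + 2 * Real.sqrt (μ * ν) * z.re, ‖z‖)) :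
    Set.InjOn f {z : ℂ | 0 < z.im} ∧
      f '' {z : ℂ | 0 < z.im} =
        {p : ℝ × ℝ | 0 < p.2 ∧
          p.2 * (Real.sqrt μ - Real.sqrt ν) ^ 2 < p.1 ∧
          p.1 < p.2 * (Real.sqrt μ + Real.sqrt ν) ^ 2} := by
  have hμ : 0 < μ := hν.trans_le hμν
  have hc : 0 < 2 * √(μ * ν) := by positivity
  have hf_comp : f = (fun p : ℝ × ℝ => ((μ + ν) * p.2 + 2 * √(μ * ν) * p.1, p.2)) ∘
      fun z : ℂ => (z.re, ‖z‖) := by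
    funext z
    rw [hf z, Function.comp_apply, mul_comm ‖z‖]
  refine ⟨hf_comp ▸ (injective_shear _ hc.ne').comp_injOn Complex.injOn_re_norm_upperHalf, ?_⟩
  rw [hf_comp, image_comp, Complex.image_re_norm_upperHalf, image_abs_lt_shear _ hc,
    Real.sqrt_sub_sqrt_sq hμ.le hν.le, Real.sqrt_add_sqrt_sq hμ.le hν.le]
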